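/- arXiv:2512.21794 — 6 statements merged into one kernel-verified Lean document; each statement's English description precedes it below -/
import Mathlib

section
/- Let p(X_i = x) > 0 for all x but with γ := max_x P(X_i = x) < 1, and let B be an invertible d×d row-stochastic matrix (the belief matrix). Then there exists a matrix M (with M = B Rᵀ for R = (B⁻¹M)ᵀ) with all diagonal entries equal to c > 0 and all off-diagonal entries equal to -cγ/(1-γ), such that for every column x', the weighted sum Σ_x P(X_i = x) · M_{x x'} ≤ 0. -/
open Matrix BigOperators

/-- Feasibility of the optimal two-agent peer-prediction LP: given a probability
vector `q` (the focal agent's observation distribution) with max probability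
`γ < 1` and an invertible row-stochastic belief matrix `B`, there is a matrix
`M = B * Rᵀ` with diagonal entries `c` and off-diagonal entries `-cγ/(1-γ)`
whose `q`-weighted column sums are nonpositive. -/
theorem stmt0 (d : ℕ) (hd : 0 < d) (q : Fin d → ℝ) (γ c : ℝ)
    (hq_pos : ∀ x, 0 < q x) (hq_sum : ∑ x, q x = 1)
    (hγ : ∀ x, q x ≤ γ) (hγ1 : γ < 1) (hc : 0 < c)
    (B : Matrix (Fin d) (Fin d) ℝ)
    (hB_nonneg : ∀ x y, 0 ≤ B x y) (hB_row : ∀ x, ∑ y, B x y = 1)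
    (hB_inv : IsUnit B.det) :
    ∃ M : Matrix (Fin d) (Fin d) ℝ,
      (∃ R : Matrix (Fin d) (Fin d) ℝ, M = B * Rᵀ) ∧
      (∀ x, M x x = c) ∧
      (∀ x y, x ≠ y → M x y = -c * γ / (1 - γ)) ∧
      (∀ x', ∑ x, q x * M x x' ≤ 0) := by
  set M : Matrix (Fin d) (Fin d) ℝ :=
    fun x y => if x = y then c else -c * γ / (1 - γ) with hM
  have h1γ : 0 < 1 - γ := by linarith
  refine ⟨M, ⟨(B⁻¹ * M)ᵀ, ?_⟩, ?_, ?_, ?_⟩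
  · rw [transpose_transpose, ← Matrix.mul_assoc, Matrix.mul_nonsing_inv B hB_inv,
      Matrix.one_mul]
  · intro x; simp [hM]
  · intro x y h; simp [hM, h]
  · intro x'
    have hsum : ∑ x, q x * M x x'
        = q x' * c + (1 - q x') * (-c * γ / (1 - γ)) := by
      rw [← Finset.sum_erase_add _ _ (Finset.mem_univ x')]
      have : ∑ x ∈ Finset.univ.erase x', q x * M x x'
          = (∑ x ∈ Finset.univ.erase x', q x) * (-c * γ / (1 - γ)) := by
        rw [Finset.sum_mul]
        apply Finset.sum_congr rfl
        intro x hx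
        have hne : x ≠ x' := Finset.ne_of_mem_erase hx
        simp [hM, hne]
      rw [this, Finset.sum_erase_eq_sub (Finset.mem_univ x'), hq_sum]
      simp [hM]
      ring
    rw [hsum]
    have hq' : q x' ≤ γ := hγ x'
    have h1 : 0 ≤ 1 - q x' := by linarith
    rw [div_eq_mul_inv, ← sub_nonneg, zero_sub]
    have : -(q x' * c + (1 - q x') * (-c * γ * (1 - γ)⁻¹))
        = ((1 - q x') * γ - q x' * (1 - γ)) * c * (1 - γ)⁻¹ := by
      field_simp; ring
    rw [this]
    have hnum : 0 ≤ (1 - q x') * γ - q x' * (1 - γ) := by nlinarith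
    positivity
end

section
/- Consider the linear program over matrices M ∈ ℝ^{d×d}: M_{xx} ≥ c for all x, M_{xy} ≤ c for x ≠ y, and Σ_x q_x M_{x x'} ≤ 0 for all x', where q is a probability vector with max_x q_x < 1 and c > 0. Then the minimum of the objective Σ_x q_x M_{xx} over feasible M equals c, and at any optimal solution the constraint M_{xx} ≥ c is binding (M_{xx} = c) for every x with q_x > 0. -/
open BigOperators

/-!
Since `q` is a probability vector, the objective `∑ x, q x * M x x` is a convex combination of
the diagonal entries, all `≥ c`; hence it is at least `c`, with equality only if `M x x = c`
wherever `q x > 0`. The value `c` is attained by the matrix with `c` on the diagonal and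
`-c q_y / (1 - q_y)` in column `y` off the diagonal, whose columns have `q`-weighted sum `0`.
-/

section WeightedAverage

variable {ι : Type*} [Fintype ι] {q f : ι → ℝ} {c : ℝ}

lemma le_sum_mul_of_forall_le (hq_nonneg : ∀ x, 0 ≤ q x) (hq_sum : ∑ x, q x = 1)
    (hf : ∀ x, c ≤ f x) : c ≤ ∑ x, q x * f x :=
  calc c = ∑ x, q x * c := by rw [← Finset.sum_mul, hq_sum, one_mul]
    _ ≤ ∑ x, q x * f x := by gcongr with x; exacts [hq_nonneg x, hf x]

lemma eq_of_sum_mul_eq_of_forall_le (hq_nonneg : ∀ x, 0 ≤ q x) (hq_sum : ∑ x, q x = 1)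
    (hf : ∀ x, c ≤ f x) (h_eq : ∑ x, q x * f x = c) {x : ι} (hx : 0 < q x) : f x = c := by
  have h_zero : ∑ y, q y * (f y - c) = 0 := by
    simp only [mul_sub, Finset.sum_sub_distrib, ← Finset.sum_mul, h_eq, hq_sum, one_mul, sub_self]
  have h_nonneg : ∀ y ∈ Finset.univ, 0 ≤ q y * (f y - c) :=
    fun y _ => mul_nonneg (hq_nonneg y) (sub_nonneg.mpr (hf y))
  have hx_zero := (Finset.sum_eq_zero_iff_of_nonneg h_nonneg).mp h_zero x (Finset.mem_univ x)
  have := (mul_eq_zero.mp hx_zero).resolve_left hx.ne'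
  linarith

end WeightedAverage

section OptimalPayment

variable {ι : Type*} [DecidableEq ι] (q : ι → ℝ) (c : ℝ)

noncomputable def optimalPayment : Matrix ι ι ℝ :=
  Matrix.of fun x y => if x = y then c else -c * q y / (1 - q y)

variable {q c}

lemma optimalPayment_diag (x : ι) : optimalPayment q c x x = c := by
  simp [optimalPayment]

lemma optimalPayment_offDiag_le (hc : 0 ≤ c) (hq_nonneg : ∀ x, 0 ≤ q x) (hq_lt : ∀ x, q x < 1)
    {x y : ι} (hxy : x ≠ y) : optimalPayment q c x y ≤ c := by
  have h_off : -c * q y / (1 - q y) ≤ 0 :=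
    div_nonpos_of_nonpos_of_nonneg (by nlinarith [hq_nonneg y]) (by linarith [hq_lt y])
  simp only [optimalPayment, Matrix.of_apply, if_neg hxy]
  linarith

lemma sum_mul_optimalPayment_col [Fintype ι] (hq_sum : ∑ x, q x = 1) (hq_lt : ∀ x, q x < 1)
    (y : ι) :
    ∑ x, q x * optimalPayment q c x y = 0 := by
  set a := -c * q y / (1 - q y)
  have h_split :
      ∀ x, q x * optimalPayment q c x y = q x * a + if x = y then q x * (c - a) else 0 :=
    fun x => by rw [optimalPayment, Matrix.of_apply]; split_ifs <;> ring
  have h_a : (1 - q y) * a = -c * q y := mul_div_cancel₀ _ (by linarith [hq_lt y])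
  simp only [h_split, Finset.sum_add_distrib, ← Finset.sum_mul, hq_sum, Finset.sum_ite_eq',
    Finset.mem_univ, if_true]
  linarith

end OptimalPayment

theorem stmt1_general (d : ℕ) (q : Fin d → ℝ) (c : ℝ) (hc : 0 < c)
    (hq_nonneg : ∀ x, 0 ≤ q x) (hq_sum : ∑ x, q x = 1) (hq_lt : ∀ x, q x < 1) :
    IsLeast
      {v : ℝ | ∃ M : Matrix (Fin d) (Fin d) ℝ,
        (∀ x, c ≤ M x x) ∧
        (∀ x y, x ≠ y → M x y ≤ c) ∧
        (∀ x', ∑ x, q x * M x x' ≤ 0) ∧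
        v = ∑ x, q x * M x x} c ∧
    (∀ M : Matrix (Fin d) (Fin d) ℝ,
      (∀ x, c ≤ M x x) →
      (∀ x y, x ≠ y → M x y ≤ c) →
      (∀ x', ∑ x, q x * M x x' ≤ 0) →
      (∑ x, q x * M x x) = c →
      ∀ x, 0 < q x → M x x = c) := by
  refine ⟨⟨?_, ?_⟩, ?_⟩
  · refine ⟨optimalPayment q c, fun x => (optimalPayment_diag x).ge,
      fun x y => optimalPayment_offDiag_le hc.le hq_nonneg hq_lt,
      fun y => (sum_mul_optimalPayment_col hq_sum hq_lt y).le, ?_⟩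
    simp only [optimalPayment_diag, ← Finset.sum_mul, hq_sum, one_mul]
  · rintro v ⟨M, h_diag, -, -, rfl⟩
    exact le_sum_mul_of_forall_le hq_nonneg hq_sum h_diag
  · intro M h_diag _ _ h_opt x hx
    exact eq_of_sum_mul_eq_of_forall_le hq_nonneg hq_sum h_diag h_opt hx

/-- The optimal value of the two-agent peer-prediction LP over matrices `M`
(individual rationality `M x x ≥ c`, truthfulness `M x y ≤ c` for `x ≠ y`,
no-free-lunch `∑ x, q x * M x x' ≤ 0`) with objective `∑ x, q x * M x x`
equals `c`, and at any optimum the IR constraint is binding wherever `q x > 0`. -/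
theorem stmt1 (d : ℕ) (hd : 0 < d) (q : Fin d → ℝ) (c : ℝ) (hc : 0 < c)
    (hq_nonneg : ∀ x, 0 ≤ q x) (hq_sum : ∑ x, q x = 1) (hq_lt : ∀ x, q x < 1) :
    IsLeast
      {v : ℝ | ∃ M : Matrix (Fin d) (Fin d) ℝ,
        (∀ x, c ≤ M x x) ∧
        (∀ x y, x ≠ y → M x y ≤ c) ∧
        (∀ x', ∑ x, q x * M x x' ≤ 0) ∧
        v = ∑ x, q x * M x x} c ∧
    (∀ M : Matrix (Fin d) (Fin d) ℝ,
      (∀ x, c ≤ M x x) →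
      (∀ x y, x ≠ y → M x y ≤ c) →
      (∀ x', ∑ x, q x * M x x' ≤ 0) →
      (∑ x, q x * M x x) = c →
      ∀ x, 0 < q x → M x x = c) :=
  stmt1_general d q c hc hq_nonneg hq_sum hq_lt
end

section
/- For the margin-δ robust two-agent mechanism design LP with invertible belief matrix B, probability vector q with γ = max_x q_x < 1, cost c > 0 and margin δ ≥ 0, the optimal worst-case payment κ* satisfies c + δ ≤ κ* ≤ ‖B⁻¹‖₂ · ( c(γ|Y| + 1)/(1-γ) + δ((1+γ)|Y| + 2)/(1-γ) ). -/
/-!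
Lower bound: since `B` is row-stochastic, `(B Rᵀ)ₓₓ` is an average of entries of `R`, so it is at
most `κ`, while feasibility demands it be at least `c + δ`.

Upper bound: prescribe the payoff matrix `A = B Rᵀ` with `c + δ` on the diagonal and a constant
`b ≤ 0` off it, chosen so that `γ (c + δ) + (1 - γ) b = -δ`, and take `R = (B⁻¹ A)ᵀ`. The
marginal constraint becomes `q_x (c + δ) + (1 - q_x) b ≤ -δ`, which holds because `q_x ≤ γ`,
and every entry of `R` is a coordinate of `B⁻¹` applied to a column of `A`, hence bounded by
`‖B⁻¹‖₂` times the Euclidean norm `≤ c + δ - |Y| b` of that column.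
-/

open Matrix

section
variable {ι : Type*} [Fintype ι]

theorem mul_transpose_apply_self_le_of_abs_le {B R : Matrix ι ι ℝ} {κ : ℝ}
    (hB_nonneg : ∀ x y, 0 ≤ B x y) (hB_row : ∀ x, ∑ y, B x y = 1)
    (hR : ∀ x y, |R x y| ≤ κ) (x : ι) : (B * Rᵀ) x x ≤ κ :=
  calc (B * Rᵀ) x x = ∑ y, B x y * R x y := rfl
    _ ≤ ∑ y, B x y * κ := Finset.sum_le_sum fun y _ =>
      mul_le_mul_of_nonneg_left (abs_le.mp (hR x y)).2 (hB_nonneg x y)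
    _ = κ := by rw [← Finset.sum_mul, hB_row, one_mul]

theorem abs_apply_le_sqrt_sum_sq (v : ι → ℝ) (i : ι) : |v i| ≤ √(∑ j, v j ^ 2) := by
  rw [← Real.sqrt_sq_eq_abs]
  exact Real.sqrt_le_sqrt (Finset.single_le_sum (fun j _ => sq_nonneg (v j)) (Finset.mem_univ i))

theorem nonneg_of_sqrt_sum_sq_le_mul [Nonempty ι] {f : (ι → ℝ) → ι → ℝ} {C : ℝ}
    (hf : ∀ v, √(∑ x, f v x ^ 2) ≤ C * √(∑ x, v x ^ 2)) : 0 ≤ C := by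
  have hpos : 0 < √(∑ _x : ι, (1 : ℝ) ^ 2) := by simp [Fintype.card_pos]
  exact nonneg_of_mul_nonneg_left ((Real.sqrt_nonneg _).trans (hf fun _ => 1)) hpos

theorem abs_inv_mul_apply_le [DecidableEq ι] {B : Matrix ι ι ℝ} {nB : ℝ}
    (hnB : ∀ v : ι → ℝ, √(∑ x, (B⁻¹ *ᵥ v) x ^ 2) ≤ nB * √(∑ x, v x ^ 2))
    (A : Matrix ι ι ℝ) (y x : ι) : |(B⁻¹ * A) y x| ≤ nB * √(∑ z, A z x ^ 2) :=
  calc |(B⁻¹ * A) y x| = |(B⁻¹ *ᵥ fun z => A z x) y| := rfl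
    _ ≤ √(∑ z, (B⁻¹ *ᵥ fun z => A z x) z ^ 2) := abs_apply_le_sqrt_sum_sq _ y
    _ ≤ nB * √(∑ z, A z x ^ 2) := hnB _

theorem inv_mul_transpose_mulVec_vecMul [DecidableEq ι] {B : Matrix ι ι ℝ} (hB : IsUnit B.det)
    (A : Matrix ι ι ℝ) (q : ι → ℝ) : (B⁻¹ * A)ᵀ *ᵥ (q ᵥ* B) = q ᵥ* A := by
  rw [mulVec_transpose, vecMul_vecMul, ← Matrix.mul_assoc, mul_nonsing_inv B hB, Matrix.one_mul]

end

section
variable {ι : Type*} [DecidableEq ι]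

def diagOffDiag (a b : ℝ) : Matrix ι ι ℝ := of fun x y => if x = y then a else b

@[simp] theorem diagOffDiag_apply_self (a b : ℝ) (x : ι) : diagOffDiag a b x x = a :=
  if_pos rfl

@[simp] theorem diagOffDiag_apply_of_ne {a b : ℝ} {x y : ι} (h : x ≠ y) :
    diagOffDiag a b x y = b :=
  if_neg h

variable [Fintype ι]

theorem sum_diagOffDiag_col (g : ι → ℝ → ℝ) (a b : ℝ) (x : ι) :
    ∑ z, g z (diagOffDiag a b z x) = ∑ z, g z b + (g x a - g x b) := by
  have hcompl : ∑ z ∈ {x}ᶜ, g z (diagOffDiag a b z x) = ∑ z ∈ {x}ᶜ, g z b :=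
    Finset.sum_congr rfl fun z hz => by rw [diagOffDiag_apply_of_ne (by simpa using hz)]
  rw [Fintype.sum_eq_add_sum_compl x, Fintype.sum_eq_add_sum_compl x (fun z => g z b), hcompl,
    diagOffDiag_apply_self]
  ring

theorem sqrt_sum_sq_diagOffDiag_col_le {a b : ℝ} (ha : 0 ≤ a) (hb : b ≤ 0) (x : ι) :
    √(∑ z, diagOffDiag a b z x ^ 2) ≤ a - Fintype.card ι * b := by
  have hn : (1 : ℝ) ≤ Fintype.card ι := by exact_mod_cast Fintype.card_pos_iff.mpr ⟨x⟩
  rw [sum_diagOffDiag_col (fun _ t => t ^ 2), Finset.sum_const, Finset.card_univ, nsmul_eq_mul]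
  refine Real.sqrt_le_iff.mpr ⟨by nlinarith, ?_⟩
  have hab : 0 ≤ a * (Fintype.card ι * -b) := mul_nonneg ha (mul_nonneg (by linarith) (by linarith))
  have hbb : 0 ≤ (Fintype.card ι - 1) * Fintype.card ι * b ^ 2 := by
    have := sub_nonneg.mpr hn
    positivity
  nlinarith

theorem vecMul_diagOffDiag (q : ι → ℝ) (a b : ℝ) (x : ι) :
    (q ᵥ* diagOffDiag a b) x = b * ∑ z, q z + q x * (a - b) := by
  rw [vecMul, dotProduct, sum_diagOffDiag_col (fun z t => q z * t), ← Finset.sum_mul]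
  ring

end

noncomputable def marginOffDiag (γ c δ : ℝ) : ℝ := -(δ + γ * (c + δ)) / (1 - γ)

section marginOffDiag
variable {γ c δ : ℝ}

theorem marginOffDiag_nonpos (hγ0 : 0 ≤ γ) (hγ1 : γ < 1) (hc : 0 ≤ c) (hδ : 0 ≤ δ) :
    marginOffDiag γ c δ ≤ 0 :=
  div_nonpos_of_nonpos_of_nonneg (by nlinarith) (by linarith)

theorem marginOffDiag_le (hγ0 : 0 ≤ γ) (hγ1 : γ < 1) (hc : 0 ≤ c) (hδ : 0 ≤ δ) :
    marginOffDiag γ c δ ≤ c - δ := by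
  rw [marginOffDiag, div_le_iff₀ (by linarith)]
  nlinarith

theorem add_mul_sub_marginOffDiag_le (hγ0 : 0 ≤ γ) (hγ1 : γ < 1) (hc : 0 ≤ c) (hδ : 0 ≤ δ)
    {p : ℝ} (hp : p ≤ γ) : marginOffDiag γ c δ + p * (c + δ - marginOffDiag γ c δ) ≤ -δ := by
  have hb := marginOffDiag_nonpos hγ0 hγ1 hc hδ
  have hb_mul : marginOffDiag γ c δ * (1 - γ) = -(δ + γ * (c + δ)) :=
    div_mul_cancel₀ _ (by linarith)
  nlinarith

theorem sub_mul_marginOffDiag_le (hγ0 : 0 ≤ γ) (hγ1 : γ < 1) (hc : 0 ≤ c) (hδ : 0 ≤ δ) (n : ℝ) :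
    c + δ - n * marginOffDiag γ c δ ≤
      c * (γ * n + 1) / (1 - γ) + δ * ((1 + γ) * n + 2) / (1 - γ) := by
  rw [marginOffDiag, ← add_div, mul_div_assoc', sub_div' (by linarith),
    div_le_div_iff_of_pos_right (by linarith)]
  nlinarith

end marginOffDiag

theorem exists_payment_matrix {ι : Type*} [Fintype ι] [DecidableEq ι] {B : Matrix ι ι ℝ}
    (hB_inv : IsUnit B.det) {q : ι → ℝ} (hq_sum : ∑ x, q x = 1) {γ c δ nB : ℝ}
    (hγ : ∀ x, q x ≤ γ) (hγ0 : 0 ≤ γ) (hγ1 : γ < 1) (hc : 0 ≤ c) (hδ : 0 ≤ δ) (hnB0 : 0 ≤ nB)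
    (hnB : ∀ v : ι → ℝ, √(∑ x, (B⁻¹ *ᵥ v) x ^ 2) ≤ nB * √(∑ x, v x ^ 2)) :
    ∃ R : Matrix ι ι ℝ,
      (∀ x y, |R x y| ≤ nB * (c + δ - Fintype.card ι * marginOffDiag γ c δ)) ∧
      (∀ x, c + δ ≤ (B * Rᵀ) x x) ∧
      (∀ x y, x ≠ y → (B * Rᵀ) x y ≤ c - δ) ∧
      (∀ x, (∑ y, R x y * ∑ x', q x' * B x' y) ≤ -δ) := by
  set A : Matrix ι ι ℝ := diagOffDiag (c + δ) (marginOffDiag γ c δ)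
  have hBR : B * (B⁻¹ * A)ᵀᵀ = A := by
    rw [transpose_transpose, ← Matrix.mul_assoc, mul_nonsing_inv B hB_inv, Matrix.one_mul]
  refine ⟨(B⁻¹ * A)ᵀ, fun x y => ?_, fun x => ?_, fun x y hxy => ?_, fun x => ?_⟩
  · exact (abs_inv_mul_apply_le hnB A y x).trans <| mul_le_mul_of_nonneg_left
      (sqrt_sum_sq_diagOffDiag_col_le (by linarith) (marginOffDiag_nonpos hγ0 hγ1 hc hδ) x) hnB0
  · rw [hBR]
    exact (diagOffDiag_apply_self _ _ x).ge
  · rw [hBR]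
    exact (diagOffDiag_apply_of_ne hxy).trans_le (marginOffDiag_le hγ0 hγ1 hc hδ)
  · have hmarg : ∑ y, (B⁻¹ * A)ᵀ x y * ∑ x', q x' * B x' y = (q ᵥ* A) x :=
      congrFun (inv_mul_transpose_mulVec_vecMul hB_inv A q) x
    rw [hmarg, vecMul_diagOffDiag, hq_sum, mul_one]
    exact add_mul_sub_marginOffDiag_le hγ0 hγ1 hc hδ (hγ x)

/-- Bounds on the optimal worst-case payment `κ*` of the margin-`δ` robust
two-agent mechanism design LP.  Here `nB` is (an upper bound attaining)
`‖B⁻¹‖₂`, expressed via the Euclidean operator-norm characterization, and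
`dvec` is the reference agent's marginal, `dᵀ = ∑ x q x • B x ·`.
Every feasible worst-case payment is at least `c + δ`, and there is a feasible
mechanism whose worst-case payment is at most
`nB * (c(γd+1)/(1-γ) + δ((1+γ)d+2)/(1-γ))`; hence the optimum `κ*` lies
between these two values. -/
theorem stmt6 (d : ℕ) (hd : 0 < d) (B : Matrix (Fin d) (Fin d) ℝ)
    (hB_nonneg : ∀ x y, 0 ≤ B x y) (hB_row : ∀ x, ∑ y, B x y = 1)
    (hB_inv : IsUnit B.det)
    (q : Fin d → ℝ) (hq_nonneg : ∀ x, 0 ≤ q x) (hq_sum : ∑ x, q x = 1)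
    (γ : ℝ) (hγ : ∀ x, q x ≤ γ) (hγ1 : γ < 1)
    (c δ : ℝ) (hc : 0 < c) (hδ : 0 ≤ δ)
    (nB : ℝ)
    (hnB : ∀ v : Fin d → ℝ,
      Real.sqrt (∑ x, ((B⁻¹).mulVec v x) ^ 2) ≤ nB * Real.sqrt (∑ x, (v x) ^ 2))
    (feasible : ℝ → Prop)
    (hfeasible : ∀ κ, feasible κ ↔
      ∃ R : Matrix (Fin d) (Fin d) ℝ,
        (∀ x y, |R x y| ≤ κ) ∧
        (∀ x, c + δ ≤ (B * Rᵀ) x x) ∧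
        (∀ x y, x ≠ y → (B * Rᵀ) x y ≤ c - δ) ∧
        (∀ x, (∑ y, R x y * ∑ x', q x' * B x' y) ≤ -δ))
    (κstar : ℝ) (hκstar : IsLeast {κ | feasible κ} κstar) :
    c + δ ≤ κstar ∧
    κstar ≤ nB * (c * (γ * d + 1) / (1 - γ) + δ * ((1 + γ) * d + 2) / (1 - γ)) := by
  have x₀ : Fin d := ⟨0, hd⟩
  have hγ0 : 0 ≤ γ := (hq_nonneg x₀).trans (hγ x₀)
  constructor
  · obtain ⟨R, hR, hdiag, -, -⟩ := (hfeasible κstar).mp hκstar.1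
    exact (hdiag x₀).trans (mul_transpose_apply_self_le_of_abs_le hB_nonneg hB_row hR x₀)
  · have : Nonempty (Fin d) := ⟨x₀⟩
    have hnB0 : 0 ≤ nB := nonneg_of_sqrt_sum_sq_le_mul hnB
    have hfeas := (hfeasible _).mpr
      (exists_payment_matrix hB_inv hq_sum hγ hγ0 hγ1 hc.le hδ hnB0 hnB)
    rw [Fintype.card_fin] at hfeas
    exact (hκstar.2 hfeas).trans
      (mul_le_mul_of_nonneg_left (sub_mul_marginOffDiag_le hγ0 hγ1 hc.le hδ d) hnB0)
end

section
/- Let p₀ and p₁ be the distributions on {0,1}² defined by: p₀ assigns probability (1-2δ)/4 to (0,0), (1+2δ)/4 to (0,1), 1/2 to (1,0), 0 to (1,1); and p₁ assigns (1+2δ)/4 to (0,0), (1-2δ)/4 to (0,1), 1/2 to (1,0), 0 to (1,1), where δ ∈ (0, 1/4). Then KL(p₀ ‖ p₁) = δ log(1 + 4δ/(1-2δ)) ≤ 4δ²/(1-2δ) ≤ 8δ². -/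
open Real

/-!
Writing `a = (1 - 2δ)/4` and `b = (1 + 2δ)/4`, the two distributions differ only by swapping `a`
and `b` on the first two points, so `KL(p₀ ‖ p₁) = a log(a/b) + b log(b/a) = (b - a) log(b/a)`,
with `b - a = δ`. The bound is `log x ≤ x - 1` at `x = b/a`, which gives `(b - a)²/a`.
-/

theorem mul_log_div_add_mul_log_div_swap (a b : ℝ) :
    a * log (a / b) + b * log (b / a) = (b - a) * log (b / a) := by
  rw [← inv_div b a, log_inv]
  ring

theorem mul_log_div_add_mul_log_div_swap_le {a b : ℝ} (ha : 0 < a) (hab : a ≤ b) :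
    a * log (a / b) + b * log (b / a) ≤ (b - a) ^ 2 / a := by
  have hlog : log (b / a) ≤ (b - a) / a := by
    calc log (b / a) ≤ b / a - 1 := log_le_sub_one_of_pos (div_pos (ha.trans_le hab) ha)
      _ = (b - a) / a := by field_simp
  calc a * log (a / b) + b * log (b / a) = (b - a) * log (b / a) :=
        mul_log_div_add_mul_log_div_swap a b
    _ ≤ (b - a) * ((b - a) / a) := mul_le_mul_of_nonneg_left hlog (by linarith)
    _ = (b - a) ^ 2 / a := by ring

/-- KL divergence between the two hard instances `p₀, p₁` on `{0,1}²`
(with labels encoded as `Bool × Bool`): it equals `δ log(1 + 4δ/(1-2δ))` and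
is at most `4δ²/(1-2δ) ≤ 8δ²`, for `δ ∈ (0, 1/4)`.  The KL divergence uses
the convention `0 · log(0/0) = 0`. -/
theorem stmt13 (δ : ℝ) (hδ0 : 0 < δ) (hδ1 : δ < 1 / 4)
    (p₀ p₁ : Bool × Bool → ℝ)
    (hp₀ : p₀ = fun z => if z = (false, false) then (1 - 2 * δ) / 4
      else if z = (false, true) then (1 + 2 * δ) / 4
      else if z = (true, false) then 1 / 2 else 0)
    (hp₁ : p₁ = fun z => if z = (false, false) then (1 + 2 * δ) / 4
      else if z = (false, true) then (1 - 2 * δ) / 4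
      else if z = (true, false) then 1 / 2 else 0)
    (KL : ℝ)
    (hKL : KL = ∑ z : Bool × Bool,
      if p₀ z = 0 then 0 else p₀ z * Real.log (p₀ z / p₁ z)) :
    KL = δ * Real.log (1 + 4 * δ / (1 - 2 * δ)) ∧
    KL ≤ 4 * δ ^ 2 / (1 - 2 * δ) ∧
    KL ≤ 8 * δ ^ 2 := by
  have hquad : 4 * δ ^ 2 / (1 - 2 * δ) ≤ 8 * δ ^ 2 := by
    rw [div_le_iff₀ (by linarith)]
    nlinarith [mul_nonneg (sq_nonneg δ) (by linarith : (0 : ℝ) ≤ 1 - 4 * δ)]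
  have hden : 1 - 2 * δ ≠ 0 := by linarith
  set a := (1 - 2 * δ) / 4 with ha_def
  set b := (1 + 2 * δ) / 4 with hb_def
  have ha : 0 < a := by linarith
  have hb : 0 < b := by linarith
  have hKL_swap : KL = a * log (a / b) + b * log (b / a) := by
    subst hp₀ hp₁ hKL
    simp [Fintype.sum_prod_type, ha.ne', hb.ne', add_comm]
  have hdiff : b - a = δ := by ring
  have hratio : b / a = 1 + 4 * δ / (1 - 2 * δ) := by
    rw [ha_def, hb_def]
    field_simp
    ring
  have hbound : (b - a) ^ 2 / a = 4 * δ ^ 2 / (1 - 2 * δ) := by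
    rw [hdiff, ha_def]
    field_simp
  have hle : KL ≤ 4 * δ ^ 2 / (1 - 2 * δ) := by
    rw [hKL_swap, ← hbound]
    exact mul_log_div_add_mul_log_div_swap_le ha (by linarith)
  refine ⟨?_, hle, hle.trans hquad⟩
  rw [hKL_swap, mul_log_div_add_mul_log_div_swap, hdiff, hratio]
end

section
/- Let δ ∈ (0, 1/4) and let M₀ = [[a, b],[c, d]] be a 2×2 real matrix with 1 ≤ a ≤ 1+2δ, 1 ≤ d ≤ 1+2δ, b ≤ 1, c ≤ 1, a + c ≤ 0, b + d ≤ 0. Let G = [[(1-2δ)/(1+2δ), 4δ/(1+2δ)], [0, 1]]. Then the (1,1)-entry of G·M₀ is strictly less than 1. -/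
open Matrix

theorem one_sub_two_mul_mul_add_four_mul_mul_lt {δ a c : ℝ} (hδ : 0 < δ) (ha1 : 1 ≤ a)
    (ha2 : a ≤ 1 + 2 * δ) (hac : a + c ≤ 0) : (1 - 2 * δ) * a + 4 * δ * c < 1 + 2 * δ :=
  calc (1 - 2 * δ) * a + 4 * δ * c
      ≤ (1 - 2 * δ) * a + 4 * δ * -a := by gcongr; linarith
    _ = a - 6 * δ * a := by ring
    _ ≤ 1 + 2 * δ - 6 * δ * 1 := by gcongr
    _ < 1 + 2 * δ := by linarith

theorem stmt14_general (δ a b c d : ℝ) (hδ0 : 0 < δ)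
    (ha1 : 1 ≤ a) (ha2 : a ≤ 1 + 2 * δ)
    (hac : a + c ≤ 0) :
    (!![(1 - 2 * δ) / (1 + 2 * δ), 4 * δ / (1 + 2 * δ); 0, 1] *
      !![a, b; c, d]) 0 0 < 1 := by
  have hpos : 0 < 1 + 2 * δ := by positivity
  rw [mul_fin_two, of_apply, cons_val_zero, cons_val_zero, div_mul_eq_mul_div,
    div_mul_eq_mul_div, ← add_div, div_lt_one hpos]
  exact one_sub_two_mul_mul_add_four_mul_mul_lt hδ0 ha1 ha2 hac

/-- Competition lemma (forward direction) in the regret lower bound: any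
cheap incentive-compatible mechanism matrix `M₀` for instance 0 violates the
truthfulness constraint under instance 1, i.e. the `(1,1)` entry of `G·M₀`
with `G = B₁B₀⁻¹` is strictly less than 1. -/
theorem stmt14 (δ a b c d : ℝ) (hδ0 : 0 < δ) (hδ1 : δ < 1 / 4)
    (ha1 : 1 ≤ a) (ha2 : a ≤ 1 + 2 * δ)
    (hd1 : 1 ≤ d) (hd2 : d ≤ 1 + 2 * δ)
    (hb : b ≤ 1) (hc : c ≤ 1)
    (hac : a + c ≤ 0) (hbd : b + d ≤ 0) :
    (!![(1 - 2 * δ) / (1 + 2 * δ), 4 * δ / (1 + 2 * δ); 0, 1] *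
      !![a, b; c, d]) 0 0 < 1 :=
  stmt14_general δ a b c d hδ0 ha1 ha2 hac
end

section
/- Let T ≥ 1, τ > 0, and define the epoch schedule τ₀ = τ and τ_k - τ_{k-1} = T^{1 - 2^{-(k-1)}} τ for k ≥ 1. Then for every k ≥ 1, (τ_k - τ_{k-1}) / √(τ_{k-1}) ≤ T^{1 - 2^{-(k-1)}} τ / √(T^{1 - 2^{-(k-2)}} τ) = √(T·τ), so Σ_{k=1}^m (τ_k - τ_{k-1})/√(τ_{k-1}) ≤ m√(Tτ). -/
open BigOperators Real

/-- Sub-geometric epoch schedule for known horizon: with `τ₀ = τ` and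
`τ_k - τ_{k-1} = T^{1 - 2^{-(k-1)}} τ`, each epoch `k ≥ 1` contributes
`(τ_k - τ_{k-1})/√(τ_{k-1}) ≤ √(T τ)`, hence the sum over `k = 1, …, m`
is at most `m √(T τ)`. -/
theorem stmt17 (T τ : ℝ) (hT : 1 ≤ T) (hτ : 0 < τ)
    (sched : ℕ → ℝ) (h0 : sched 0 = τ)
    (hstep : ∀ k : ℕ, 1 ≤ k →
      sched k - sched (k - 1) = T ^ ((1 : ℝ) - (2 : ℝ) ^ ((1 : ℝ) - k)) * τ) :
    (∀ k : ℕ, 1 ≤ k →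
      (sched k - sched (k - 1)) / Real.sqrt (sched (k - 1)) ≤ Real.sqrt (T * τ)) ∧
    ∀ m : ℕ, ∑ k ∈ Finset.Icc 1 m,
      (sched k - sched (k - 1)) / Real.sqrt (sched (k - 1)) ≤ m * Real.sqrt (T * τ) := by
  have hT0 : (0:ℝ) < T := lt_of_lt_of_le one_pos hT
  have hpos : ∀ k, 0 < sched k := by
    intro k
    induction k with
    | zero => simpa [h0] using hτ
    | succ n ih =>
      have h := hstep (n+1) (by omega)
      simp only [Nat.add_sub_cancel] at h
      have hp : 0 < T ^ ((1 : ℝ) - (2 : ℝ) ^ ((1 : ℝ) - (↑(n+1) : ℝ))) * τ :=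
        mul_pos (Real.rpow_pos_of_pos hT0 _) hτ
      linarith
  have hlow : ∀ k : ℕ, 1 ≤ k →
      T ^ ((1 : ℝ) - (2 : ℝ) ^ ((1 : ℝ) - (k:ℝ))) * τ ≤ sched k := by
    intro k hk
    have h := hstep k hk
    have := hpos (k-1)
    linarith
  have main : ∀ k : ℕ, 1 ≤ k →
      (sched k - sched (k - 1)) / Real.sqrt (sched (k - 1)) ≤ Real.sqrt (T * τ) := by
    intro k hk
    rw [hstep k hk]
    rcases Nat.lt_or_ge k 2 with h2 | h2
    · interval_cases k
      have he : (1 : ℝ) - (2 : ℝ) ^ ((1 : ℝ) - ((1:ℕ):ℝ)) = 0 := by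
        norm_num
      rw [he, Real.rpow_zero, one_mul]
      simp only [Nat.sub_self, h0]
      rw [Real.div_sqrt]
      exact Real.sqrt_le_sqrt (le_mul_of_one_le_left hτ.le hT)
    · have hj : 1 ≤ k - 1 := by omega
      have hlb := hlow (k-1) hj
      have hc : ((k-1 : ℕ):ℝ) = (k:ℝ) - 1 := by
        have : (1:ℕ) ≤ k := hk
        push_cast [Nat.cast_sub this]
        ring
      set x := (2:ℝ) ^ ((1:ℝ) - (k:ℝ)) with hx
      have hx0 : 0 < x := Real.rpow_pos_of_pos (by norm_num) _
      have hDb : (2:ℝ) ^ ((1:ℝ) - ((k-1:ℕ):ℝ)) = x * 2 := by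
        rw [hc, show (1:ℝ) - ((k:ℝ) - 1) = ((1:ℝ) - k) + 1 by ring,
          Real.rpow_add (by norm_num : (0:ℝ) < 2), Real.rpow_one]
      rw [hDb] at hlb
      have hden0 : 0 < Real.sqrt (T ^ ((1:ℝ) - x * 2) * τ) :=
        Real.sqrt_pos.mpr (mul_pos (Real.rpow_pos_of_pos hT0 _) hτ)
      have hD : Real.sqrt (T ^ ((1:ℝ) - x * 2) * τ) ≤ Real.sqrt (sched (k-1)) :=
        Real.sqrt_le_sqrt hlb
      have hnum0 : 0 ≤ T ^ ((1:ℝ) - x) * τ :=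
        (mul_pos (Real.rpow_pos_of_pos hT0 _) hτ).le
      have h1 : T ^ ((1:ℝ)-x) * T ^ ((1:ℝ)-x) = T * T ^ ((1:ℝ) - x * 2) := by
        have h2' : T * T ^ ((1:ℝ) - x * 2) = T ^ (1:ℝ) * T ^ ((1:ℝ) - x * 2) := by
          rw [Real.rpow_one]
        rw [h2', ← Real.rpow_add hT0, ← Real.rpow_add hT0]
        ring_nf
      have hsq : T * τ * (T ^ ((1:ℝ) - x * 2) * τ) = (T ^ ((1:ℝ) - x) * τ)^2 := by
        linear_combination (-τ^2) * h1
      have key : T ^ ((1:ℝ) - x) * τ =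
          Real.sqrt (T * τ) * Real.sqrt (T ^ ((1:ℝ) - x * 2) * τ) := by
        rw [← Real.sqrt_mul (by positivity : (0:ℝ) ≤ T * τ), hsq,
          Real.sqrt_sq hnum0]
      calc T ^ ((1:ℝ) - x) * τ / Real.sqrt (sched (k-1))
          ≤ T ^ ((1:ℝ) - x) * τ / Real.sqrt (T ^ ((1:ℝ) - x * 2) * τ) := by
            gcongr
        _ = Real.sqrt (T * τ) := by
            rw [key, mul_div_assoc, div_self hden0.ne', mul_one]
  refine ⟨main, fun m => ?_⟩
  calc ∑ k ∈ Finset.Icc 1 m, (sched k - sched (k - 1)) / Real.sqrt (sched (k - 1))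
      ≤ ∑ k ∈ Finset.Icc 1 m, Real.sqrt (T * τ) :=
        Finset.sum_le_sum (fun k hk => main k (Finset.mem_Icc.mp hk).1)
    _ = m * Real.sqrt (T * τ) := by
        rw [Finset.sum_const, Nat.card_Icc]
        simp [nsmul_eq_mul]
end
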